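/- arXiv:2511.03831 — 4 statements merged into one kernel-verified Lean document; each statement's English description precedes it below -/
import Mathlib

section
/- Let f : ℝᵈ → ℝ be smooth and let R ⊆ {1,…,d} with |R| ≥ 1. If the mixed partial derivative ∂^{|R|} f / ∂x_R vanishes identically, then f = Σ_{r ∈ R} g_r where each g_r : ℝᵈ → ℝ does not depend on the coordinate x_r. -/
/-- Mixed partial derivative of `f` taken once in each coordinate of the list `l`. -/
noncomputable def mixedPartial {d : ℕ} (l : List (Fin d)) (f : (Fin d → ℝ) → ℝ) :
    (Fin d → ℝ) → ℝ :=
  l.foldr (fun i g x => fderiv ℝ g x (Pi.single i 1)) f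

lemma mixedPartial_nil {d : ℕ} (f : (Fin d → ℝ) → ℝ) : mixedPartial [] f = f := rfl

lemma mixedPartial_cons {d : ℕ} (i : Fin d) (l : List (Fin d)) (f : (Fin d → ℝ) → ℝ) :
    mixedPartial (i :: l) f = fun x => fderiv ℝ (mixedPartial l f) x (Pi.single i 1) := rfl

lemma contDiff_mixedPartial {d : ℕ} (l : List (Fin d)) (f : (Fin d → ℝ) → ℝ)
    (hf : ContDiff ℝ (⊤ : ℕ∞) f) : ContDiff ℝ (⊤ : ℕ∞) (mixedPartial l f) := by
  induction l with
  | nil => exact hf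
  | cons i l ih =>
    rw [mixedPartial_cons]
    have h1 : ContDiff ℝ (⊤ : ℕ∞) (fderiv ℝ (mixedPartial l f)) := ih.fderiv_right (by simp)
    exact (ContinuousLinearMap.apply ℝ ℝ (Pi.single i 1 : Fin d → ℝ)).contDiff.comp h1

lemma mixedPartial_sub {d : ℕ} (l : List (Fin d)) (f h : (Fin d → ℝ) → ℝ)
    (hf : ContDiff ℝ (⊤ : ℕ∞) f) (hh : ContDiff ℝ (⊤ : ℕ∞) h) :
    mixedPartial l (f - h) = mixedPartial l f - mixedPartial l h := by
  induction l with
  | nil => rfl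
  | cons i l ih =>
    funext x
    have hdf := (contDiff_mixedPartial l f hf).differentiable (by simp) x
    have hdh := (contDiff_mixedPartial l h hh).differentiable (by simp) x
    show fderiv ℝ (mixedPartial l (f - h)) x (Pi.single i 1)
        = (mixedPartial (i :: l) f - mixedPartial (i :: l) h) x
    rw [ih]
    have e1 : fderiv ℝ (mixedPartial l f - mixedPartial l h) x
        = fderiv ℝ (fun y => mixedPartial l f y - mixedPartial l h y) x := rfl
    rw [fderiv_sub hdf hdh]
    simp [mixedPartial_cons]

lemma indep_of_partial_eq_zero {d : ℕ} (F : (Fin d → ℝ) → ℝ) (hF : Differentiable ℝ F)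
    (r : Fin d) (h : ∀ x, fderiv ℝ F x (Pi.single r 1) = 0)
    (x y : Fin d → ℝ) (hxy : ∀ i, i ≠ r → x i = y i) : F x = F y := by
  set v : Fin d → ℝ := Pi.single r 1 with hv
  set c : ℝ → (Fin d → ℝ) := fun t => Function.update x r t with hc
  have hceq : c = fun t => Function.update x r 0 + t • v := by
    funext t i
    by_cases hi : i = r
    · subst hi; simp [hc, hv]
    · simp [hc, hv, Function.update_of_ne hi, Pi.single_eq_of_ne hi]
  have hder : ∀ t : ℝ, HasDerivAt c v t := by
    intro t
    rw [hceq]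
    simpa using (((hasDerivAt_id t).smul_const v).const_add (Function.update x r 0))
  have hφ : ∀ t : ℝ, HasDerivAt (fun t => F (c t)) 0 t := by
    intro t
    have := (hF (c t)).hasFDerivAt.comp_hasDerivAt t (hder t)
    simpa [h (c t), Function.comp_def] using this
  have hconst : ∀ s t : ℝ, F (c s) = F (c t) := by
    intro s t
    exact is_const_of_deriv_eq_zero (f := fun t => F (c t))
      (fun u => (hφ u).differentiableAt) (fun u => (hφ u).deriv) s t
  have h1 : F x = F (c (x r)) := by rw [hc]; simp
  have h2 : F y = F (c (y r)) := by
    congr 1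
    funext i
    by_cases hi : i = r
    · subst hi; simp [hc]
    · simp [hc, Function.update_of_ne hi, hxy i hi]
  rw [h1, h2]; exact hconst _ _

lemma mixedPartial_comp_clm {d : ℕ} (l : List (Fin d)) (f : (Fin d → ℝ) → ℝ)
    (hf : ContDiff ℝ (⊤ : ℕ∞) f) (A : (Fin d → ℝ) →L[ℝ] (Fin d → ℝ))
    (hA : ∀ i ∈ l, A (Pi.single i 1) = Pi.single i 1) :
    ∀ x, mixedPartial l (f ∘ A) x = mixedPartial l f (A x) := by
  induction l with
  | nil => intro x; rfl
  | cons i l ih =>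
    intro x
    have hrec : mixedPartial l (f ∘ A) = (mixedPartial l f) ∘ A := by
      funext z; exact ih (fun j hj => hA j (List.mem_cons_of_mem i hj)) z
    have hG : Differentiable ℝ (mixedPartial l f) :=
      (contDiff_mixedPartial l f hf).differentiable (by simp)
    have h1 : mixedPartial (i :: l) (f ∘ ⇑A) x
        = fderiv ℝ ((mixedPartial l f) ∘ ⇑A) x (Pi.single i 1) := by
      rw [mixedPartial_cons, hrec]
    rw [h1, fderiv_comp x (hG (A x)) A.differentiableAt, A.fderiv]
    simp [mixedPartial_cons, hA i List.mem_cons_self]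

/-- The zeroing-out-coordinate-`r` continuous linear map. -/
noncomputable def zeroAt {d : ℕ} (r : Fin d) : (Fin d → ℝ) →L[ℝ] (Fin d → ℝ) :=
  ContinuousLinearMap.id ℝ (Fin d → ℝ)
    - (ContinuousLinearMap.proj r).smulRight (Pi.single r 1)

lemma zeroAt_apply {d : ℕ} (r : Fin d) (x : Fin d → ℝ) (i : Fin d) :
    zeroAt r x i = if i = r then 0 else x i := by
  simp only [zeroAt, ContinuousLinearMap.sub_apply, ContinuousLinearMap.id_apply,
    ContinuousLinearMap.smulRight_apply, ContinuousLinearMap.proj_apply,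
    Pi.sub_apply, Pi.smul_apply, smul_eq_mul]
  by_cases hi : i = r
  · subst hi; simp
  · simp [Pi.single_eq_of_ne hi, hi]

lemma zeroAt_single {d : ℕ} (r j : Fin d) (hj : j ≠ r) :
    zeroAt r (Pi.single j 1 : Fin d → ℝ) = Pi.single j 1 := by
  funext i
  rw [zeroAt_apply]
  by_cases hi : i = r
  · subst hi; simp [Pi.single_eq_of_ne (Ne.symm hj)]
  · simp [hi]

lemma aux_decomp {d : ℕ} : ∀ (l : List (Fin d)), l ≠ [] → l.Nodup →
    ∀ (f : (Fin d → ℝ) → ℝ), ContDiff ℝ (⊤ : ℕ∞) f →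
    (∀ x, mixedPartial l f x = 0) →
    ∃ g : Fin d → ((Fin d → ℝ) → ℝ),
      (∀ x, f x = ∑ r ∈ l.toFinset, g r x) ∧
      (∀ r ∈ l, ∀ x y : Fin d → ℝ, (∀ i, i ≠ r → x i = y i) → g r x = g r y) := by
  intro l
  induction l with
  | nil => intro h; exact absurd rfl h
  | cons r t ih =>
    intro _ hnd f hf hv
    have hrt : r ∉ t := (List.nodup_cons.mp hnd).1
    have hndt : t.Nodup := (List.nodup_cons.mp hnd).2
    by_cases ht : t = []
    · subst ht
      refine ⟨fun i => if i = r then f else 0, ?_, ?_⟩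
      · intro x; simp
      · intro r' hr' x y hxy
        have hr'r : r' = r := by simpa using hr'
        simp only [hr'r] at hxy ⊢
        simp only [if_true]
        refine indep_of_partial_eq_zero f (hf.differentiable (by simp)) r ?_ x y hxy
        intro z
        simpa [mixedPartial_cons, mixedPartial_nil] using hv z
    · -- inductive step
      set A := zeroAt r with hAdef
      have hAagree : ∀ x : Fin d → ℝ, ∀ i, i ≠ r → A x i = x i := by
        intro x i hi; rw [zeroAt_apply]; simp [hi]
      set G := mixedPartial t f with hG
      have hGsmooth : ContDiff ℝ (⊤ : ℕ∞) G := contDiff_mixedPartial t f hf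
      have hGzero : ∀ x, fderiv ℝ G x (Pi.single r 1) = 0 := fun x => hv x
      have hGindep : ∀ x, G x = G (A x) := by
        intro x
        exact indep_of_partial_eq_zero G (hGsmooth.differentiable (by simp)) r hGzero x (A x)
          (fun i hi => (hAagree x i hi).symm)
      set f₀ : (Fin d → ℝ) → ℝ := f ∘ A with hf₀
      have hf₀smooth : ContDiff ℝ (⊤ : ℕ∞) f₀ := hf.comp A.contDiff
      have hsub : ∀ x, mixedPartial t (f - f₀) x = 0 := by
        intro x
        rw [mixedPartial_sub t f f₀ hf hf₀smooth]
        have hcomp : mixedPartial t f₀ x = G (A x) :=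
          mixedPartial_comp_clm t f hf A
            (fun j hj => zeroAt_single r j (fun hjr => hrt (hjr ▸ hj))) x
        simp [hcomp, ← hGindep x]; exact sub_self _
      obtain ⟨g', hg'sum, hg'indep⟩ := ih ht hndt (f - f₀) (hf.sub hf₀smooth) hsub
      refine ⟨fun i => if i = r then f₀ else g' i, ?_, ?_⟩
      · intro x
        have hrn : r ∉ t.toFinset := by simpa using hrt
        rw [List.toFinset_cons, Finset.sum_insert hrn]
        have : ∑ s ∈ t.toFinset, (if s = r then f₀ else g' s) x
            = ∑ s ∈ t.toFinset, g' s x := by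
          apply Finset.sum_congr rfl
          intro s hs
          have : s ≠ r := fun h => hrt (h ▸ List.mem_toFinset.mp hs)
          simp [this]
        rw [this]
        have hgr : ((fun i => if i = r then f₀ else g' i) r) = f₀ := if_pos rfl
        rw [hgr]
        have hx := hg'sum x
        simp only [Pi.sub_apply] at hx
        rw [← hx]; ring
      · intro r' hr' x y hxy
        rcases List.mem_cons.mp hr' with h | h
        · simp only [h] at hxy ⊢
          simp only [if_true]
          have hAxy : A x = A y := by
            funext i
            by_cases hi : i = r
            · rw [hAdef, zeroAt_apply, zeroAt_apply]; simp [hi]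
            · rw [hAagree x i hi, hAagree y i hi, hxy i hi]
          show f (A x) = f (A y)
          rw [hAxy]
        · have hne : r' ≠ r := fun he => hrt (he ▸ h)
          have hgr : ((fun i => if i = r then f₀ else g' i) r') = g' r' := if_neg hne
          rw [hgr]
          exact hg'indep r' h x y hxy

theorem stmt_1 {d : ℕ} (f : (Fin d → ℝ) → ℝ) (hf : ContDiff ℝ (⊤ : ℕ∞) f)
    (R : Finset (Fin d)) (hR : R.Nonempty)
    (hvanish : ∀ x, mixedPartial R.toList f x = 0) :
    ∃ g : Fin d → ((Fin d → ℝ) → ℝ),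
      (∀ x, f x = ∑ r ∈ R, g r x) ∧
      (∀ r ∈ R, ∀ x y : Fin d → ℝ, (∀ i, i ≠ r → x i = y i) → g r x = g r y) := by
  have hne : R.toList ≠ [] := by
    simp [Finset.toList_eq_nil]
    exact hR.ne_empty
  obtain ⟨g, hsum, hindep⟩ := aux_decomp R.toList hne (Finset.nodup_toList R) f hf hvanish
  refine ⟨g, ?_, ?_⟩
  · intro x
    rw [hsum x]
    congr 1
    rw [Finset.toList_toFinset]
  · intro r hr
    exact hindep r (Finset.mem_toList.mpr hr)
end

section
/- Let p(x, y) = p_n(y − f(x)) · p_x(x) on ℝ², where p_n, p_x are strictly positive C³ densities and f is C³. Suppose there also exist a strictly positive C³ density p̃_n, a function q, and a C³ function g with p(x, y) = p̃_n(x − g(y)) · q(y) for all (x, y). Set ν = log p_n, ξ = log p_x, and suppose f'(x) ≠ 0 and ν''(y − f(x)) ≠ 0 at a point. Then at that point ξ''' = ξ''·(−ν'''·f'/ν'' + f''/f') + (−2ν''·f''·f' + ν'·f''' + ν'·ν'''·f'·f''/ν'' − ν'·(f'')²/f'), where ν and its derivatives are evaluated at y − f(x). -/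
private lemma cd_deriv3 {p : ℝ → ℝ} (h : ContDiff ℝ 3 p) : ContDiff ℝ 2 (deriv p) := by
  have h' : ContDiff ℝ (2+1) p := by norm_num; exact h
  exact (contDiff_succ_iff_deriv.mp h').2.2

private lemma cd_deriv2 {p : ℝ → ℝ} (h : ContDiff ℝ 2 p) : ContDiff ℝ 1 (deriv p) := by
  have h' : ContDiff ℝ (1+1) p := by norm_num; exact h
  exact (contDiff_succ_iff_deriv.mp h').2.2

theorem stmt_5 (pn px pnt q : ℝ → ℝ) (f g : ℝ → ℝ)
    (hpn_pos : ∀ t, 0 < pn t) (hpx_pos : ∀ t, 0 < px t) (hpnt_pos : ∀ t, 0 < pnt t)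
    (hpn : ContDiff ℝ 3 pn) (hpx : ContDiff ℝ 3 px)
    (hpnt : ContDiff ℝ 3 pnt) (hf : ContDiff ℝ 3 f) (hg : ContDiff ℝ 3 g)
    (heq : ∀ x y : ℝ, pn (y - f x) * px x = pnt (x - g y) * q y)
    (x y : ℝ) (hf' : deriv f x ≠ 0)
    (hν'' : deriv (deriv (fun t => Real.log (pn t))) (y - f x) ≠ 0) :
    deriv (deriv (deriv (fun t => Real.log (px t)))) x =
      deriv (deriv (fun t => Real.log (px t))) x *
        (-(deriv (deriv (deriv (fun t => Real.log (pn t)))) (y - f x) * deriv f x) /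
            deriv (deriv (fun t => Real.log (pn t))) (y - f x) +
          deriv (deriv f) x / deriv f x) +
      (-(2 * deriv (deriv (fun t => Real.log (pn t))) (y - f x) * deriv (deriv f) x *
            deriv f x) +
        deriv (fun t => Real.log (pn t)) (y - f x) * deriv (deriv (deriv f)) x +
        deriv (fun t => Real.log (pn t)) (y - f x) *
            deriv (deriv (deriv (fun t => Real.log (pn t)))) (y - f x) * deriv f x *
            deriv (deriv f) x /
          deriv (deriv (fun t => Real.log (pn t))) (y - f x) -
        deriv (fun t => Real.log (pn t)) (y - f x) * (deriv (deriv f) x) ^ 2 /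
          deriv f x) := by
  set ν : ℝ → ℝ := fun t => Real.log (pn t) with hν_def
  set ξ : ℝ → ℝ := fun t => Real.log (px t) with hξ_def
  set νt : ℝ → ℝ := fun t => Real.log (pnt t) with hνt_def
  have hν : ContDiff ℝ 3 ν := hpn.log fun t => (hpn_pos t).ne'
  have hξ : ContDiff ℝ 3 ξ := hpx.log fun t => (hpx_pos t).ne'
  have hνt : ContDiff ℝ 3 νt := hpnt.log fun t => (hpnt_pos t).ne'
  -- differentiability facts
  have hνd : Differentiable ℝ ν := hν.differentiable (by norm_num)
  have hξd : Differentiable ℝ ξ := hξ.differentiable (by norm_num)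
  have hνtd : Differentiable ℝ νt := hνt.differentiable (by norm_num)
  have hfd : Differentiable ℝ f := hf.differentiable (by norm_num)
  have hgd : Differentiable ℝ g := hg.differentiable (by norm_num)
  have hν1d : Differentiable ℝ (deriv ν) := (cd_deriv3 hν).differentiable (by norm_num)
  have hξ1d : Differentiable ℝ (deriv ξ) := (cd_deriv3 hξ).differentiable (by norm_num)
  have hνt1d : Differentiable ℝ (deriv νt) := (cd_deriv3 hνt).differentiable (by norm_num)
  have hf1d : Differentiable ℝ (deriv f) := (cd_deriv3 hf).differentiable (by norm_num)
  have hν2d : Differentiable ℝ (deriv (deriv ν)) :=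
    (cd_deriv2 (cd_deriv3 hν)).differentiable (by norm_num)
  have hξ2d : Differentiable ℝ (deriv (deriv ξ)) :=
    (cd_deriv2 (cd_deriv3 hξ)).differentiable (by norm_num)
  have hf2d : Differentiable ℝ (deriv (deriv f)) :=
    (cd_deriv2 (cd_deriv3 hf)).differentiable (by norm_num)
  -- positivity of q
  have hq_pos : ∀ b, 0 < q b := by
    intro b
    have h := heq 0 b
    nlinarith [hpn_pos (b - f 0), hpx_pos 0, hpnt_pos (0 - g b)]
  -- log equation
  have hlog : ∀ a b : ℝ, ν (b - f a) + ξ a = νt (a - g b) + Real.log (q b) := by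
    intro a b
    have h : Real.log (pn (b - f a) * px a) = Real.log (pnt (a - g b) * q b) := by rw [heq]
    rw [Real.log_mul (hpn_pos _).ne' (hpx_pos _).ne',
      Real.log_mul (hpnt_pos _).ne' (hq_pos _).ne'] at h
    exact h
  -- E1
  have hE1 : ∀ a b : ℝ, deriv νt (a - g b) = deriv ξ a - deriv ν (b - f a) * deriv f a := by
    intro a b
    have hconst : (fun t => ν (b - f t) + ξ t - νt (t - g b)) = fun _ => Real.log (q b) :=
      funext fun t => by have := hlog t b; linarith
    have H : HasDerivAt (fun t => ν (b - f t) + ξ t - νt (t - g b))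
        (deriv ν (b - f a) * -(deriv f a) + deriv ξ a - deriv νt (a - g b) * 1) a := by
      exact (((hνd _).hasDerivAt.comp a ((hfd a).hasDerivAt.const_sub b)).add
        (hξd a).hasDerivAt).sub
        ((hνtd _).hasDerivAt.comp a ((hasDerivAt_id a).sub_const (g b)))
    rw [hconst] at H
    have h0 := H.unique (hasDerivAt_const a (Real.log (q b)))
    linear_combination -h0
  -- E2 : differentiate E1 in a
  have hE2 : ∀ a b : ℝ, deriv (deriv νt) (a - g b) =
      deriv (deriv ξ) a + deriv (deriv ν) (b - f a) * (deriv f a) ^ 2 -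
        deriv ν (b - f a) * deriv (deriv f) a := by
    intro a b
    have hfun : (fun t => deriv νt (t - g b)) =
        fun t => deriv ξ t - deriv ν (b - f t) * deriv f t := funext fun t => hE1 t b
    have HL : HasDerivAt (fun t => deriv νt (t - g b)) (deriv (deriv νt) (a - g b) * 1) a :=
      (hνt1d _).hasDerivAt.comp a ((hasDerivAt_id a).sub_const (g b))
    have HR : HasDerivAt (fun t => deriv ξ t - deriv ν (b - f t) * deriv f t)
        (deriv (deriv ξ) a - (deriv (deriv ν) (b - f a) * -(deriv f a) * deriv f a +
          deriv ν (b - f a) * deriv (deriv f) a)) a :=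
      (hξ1d a).hasDerivAt.sub
        (((hν1d _).hasDerivAt.comp a ((hfd a).hasDerivAt.const_sub b)).mul (hf1d a).hasDerivAt)
    rw [hfun] at HL
    have h0 := HL.unique HR
    linear_combination h0
  -- E3 : differentiate E1 in b
  have hE3 : ∀ a b : ℝ, deriv (deriv νt) (a - g b) * deriv g b =
      deriv (deriv ν) (b - f a) * deriv f a := by
    intro a b
    have hfun : (fun t => deriv νt (a - g t)) =
        fun t => deriv ξ a - deriv ν (t - f a) * deriv f a := funext fun t => hE1 a t
    have HL : HasDerivAt (fun t => deriv νt (a - g t))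
        (deriv (deriv νt) (a - g b) * -(deriv g b)) b :=
      (hνt1d _).hasDerivAt.comp b ((hgd b).hasDerivAt.const_sub a)
    have HR : HasDerivAt (fun t => deriv ξ a - deriv ν (t - f a) * deriv f a)
        (-(deriv (deriv ν) (b - f a) * 1 * deriv f a)) b :=
      (((hν1d _).hasDerivAt.comp b ((hasDerivAt_id b).sub_const (f a))).mul_const
        (deriv f a)).const_sub (deriv ξ a)
    rw [hfun] at HL
    have h0 := HL.unique HR
    linear_combination -h0
  -- E4 : for all a, B a * g' y = ν'' * f'
  have hE4 : ∀ a : ℝ,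
      (deriv (deriv ξ) a + deriv (deriv ν) (y - f a) * (deriv f a) ^ 2 -
        deriv ν (y - f a) * deriv (deriv f) a) * deriv g y =
      deriv (deriv ν) (y - f a) * deriv f a := by
    intro a
    rw [← hE2 a y]
    exact hE3 a y
  -- E5 : differentiate E4 in a at x
  have hfun5 : (fun t => (deriv (deriv ξ) t + deriv (deriv ν) (y - f t) * (deriv f t) ^ 2 -
        deriv ν (y - f t) * deriv (deriv f) t) * deriv g y) =
      fun t => deriv (deriv ν) (y - f t) * deriv f t := funext hE4
  have HL : HasDerivAt (fun t => (deriv (deriv ξ) t +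
        deriv (deriv ν) (y - f t) * (deriv f t) ^ 2 -
        deriv ν (y - f t) * deriv (deriv f) t) * deriv g y)
      ((deriv (deriv (deriv ξ)) x +
        (deriv (deriv (deriv ν)) (y - f x) * -(deriv f x) * (deriv f x) ^ 2 +
          deriv (deriv ν) (y - f x) * ((2 : ℕ) * (deriv f x) ^ 1 * deriv (deriv f) x)) -
        (deriv (deriv ν) (y - f x) * -(deriv f x) * deriv (deriv f) x +
          deriv ν (y - f x) * deriv (deriv (deriv f)) x)) * deriv g y) x := by
    exact (((hξ2d x).hasDerivAt.add
      (((hν2d _).hasDerivAt.comp x ((hfd x).hasDerivAt.const_sub y)).mul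
        ((hf1d x).hasDerivAt.pow 2))).sub
      (((hν1d _).hasDerivAt.comp x ((hfd x).hasDerivAt.const_sub y)).mul
        (hf2d x).hasDerivAt)).mul_const (deriv g y)
  have HR : HasDerivAt (fun t => deriv (deriv ν) (y - f t) * deriv f t)
      (deriv (deriv (deriv ν)) (y - f x) * -(deriv f x) * deriv f x +
        deriv (deriv ν) (y - f x) * deriv (deriv f) x) x :=
    ((hν2d _).hasDerivAt.comp x ((hfd x).hasDerivAt.const_sub y)).mul (hf1d x).hasDerivAt
  rw [hfun5] at HL
  have hE5 := HL.unique HR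
  -- algebra
  have h1 := hE4 x
  set ν1 := deriv ν (y - f x)
  set ν2 := deriv (deriv ν) (y - f x)
  set ν3 := deriv (deriv (deriv ν)) (y - f x)
  set ξ2 := deriv (deriv ξ) x
  set ξ3 := deriv (deriv (deriv ξ)) x
  set F1 := deriv f x
  set F2 := deriv (deriv f) x
  set F3 := deriv (deriv (deriv f)) x
  set G1 := deriv g y
  push_cast at hE5
  have hKey : (ξ3 - ν3 * F1 ^ 3 + 3 * ν2 * F1 * F2 - ν1 * F3) * (ν2 * F1) =
      (ν2 * F2 - ν3 * F1 ^ 2) * (ξ2 + ν2 * F1 ^ 2 - ν1 * F2) := by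
    linear_combination (-(ξ3 - ν3 * F1 ^ 3 + 3 * ν2 * F1 * F2 - ν1 * F3)) * h1 +
      (ξ2 + ν2 * F1 ^ 2 - ν1 * F2) * hE5
  field_simp
  linear_combination hKey
end

section
/- Suppose ν : ℝ → ℝ and ξ : ℝ → ℝ are C³ with ν''' ≡ 0 and ξ''' ≡ 0, ν'' is a nonzero constant, and f : ℝ → ℝ is C³ with f'(x) ≠ 0 for all x. If the differential equation ξ''(x) · (f''(x)/f'(x)) + (−2ν''·f''(x)·f'(x) + ν'(y−f(x))·f'''(x) − ν'(y−f(x))·(f''(x))²/f'(x)) = 0 holds for all (x, y) ∈ ℝ², then f'' ≡ 0, i.e., f is affine. -/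
/-!
Substituting `y = f x + t` turns the equation into `A x + ν'(t) * B x = 0` for all `t`, with
`A = ξ'' f'' / f' - 2K f'' f'` and `B = f''' - f''² / f'`. Since `ν'' = K ≠ 0`, `ν'` is not
constant, so `A = B = 0`. Then `B = 0` says `(f'' / f')' = 0`, i.e. `f'' = c f'`, and `A = 0`
becomes `c (ξ'' - 2K f'²) = 0`. If `c ≠ 0`, differentiating `ξ'' = 2K f'²` gives
`0 = ξ''' = 4Kc f'²`, which is impossible.
-/

theorem exists_apply_ne_of_deriv_ne_zero {𝕜 F : Type*} [NontriviallyNormedField 𝕜]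
    [NormedAddCommGroup F] [NormedSpace 𝕜 F] {g : 𝕜 → F} {x : 𝕜} (h : deriv g x ≠ 0) :
    ∃ s t, g s ≠ g t := by
  by_contra! hg
  exact h (by rw [show g = fun _ => g 0 from funext fun s => hg s 0, deriv_const])

theorem eq_zero_and_eq_zero_of_forall_add_mul_eq_zero {α R : Type*} [CommRing R] [IsDomain R]
    {g : α → R} {a b : R} (hg : ∃ s t, g s ≠ g t) (h : ∀ t, a + b * g t = 0) :
    a = 0 ∧ b = 0 := by
  obtain ⟨s, t, hst⟩ := hg
  have hb : b = 0 := by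
    have hdiff : b * (g s - g t) = 0 := by linear_combination h s - h t
    exact (mul_eq_zero.mp hdiff).resolve_right (sub_ne_zero.mpr hst)
  exact ⟨by simpa [hb] using h s, hb⟩

theorem exists_eq_const_mul_of_deriv_mul_eq_mul_deriv {𝕜 : Type*} [RCLike 𝕜]
    {u v : 𝕜 → 𝕜} (hu : Differentiable 𝕜 u) (hv : Differentiable 𝕜 v)
    (hv0 : ∀ x, v x ≠ 0) (h : ∀ x, deriv u x * v x = u x * deriv v x) :
    ∃ c, ∀ x, u x = c * v x := by
  have hconst : ∀ x, u x / v x = u 0 / v 0 :=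
    fun x => is_const_of_deriv_eq_zero (hu.fun_div hv hv0)
      (fun y => by rw [deriv_fun_div (hu y) (hv y) (hv0 y), h y, sub_self, zero_div]) x 0
  exact ⟨u 0 / v 0, fun x => by rw [← hconst x, div_mul_cancel₀ _ (hv0 x)]⟩

theorem eq_zero_of_deriv_const_mul_sq_eq_zero {𝕜 : Type*} [NontriviallyNormedField 𝕜]
    [CharZero 𝕜] {v : 𝕜 → 𝕜} {K c x : 𝕜} (hv : DifferentiableAt 𝕜 v x)
    (hv' : deriv v x = c * v x) (hvx : v x ≠ 0) (hK : K ≠ 0)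
    (h : deriv (fun y => K * v y ^ 2) x = 0) : c = 0 := by
  have hsq : 2 * K * c * v x ^ 2 = 0 := by
    have hd := ((hv.hasDerivAt.fun_pow 2).const_mul K).deriv
    rw [h, hv'] at hd
    linear_combination -hd
  simpa [hK, hvx] using hsq

theorem stmt_7_general (ν ξ f : ℝ → ℝ) (K : ℝ)
    (hf : ContDiff ℝ 3 f)
    (hξ''' : ∀ t, deriv (deriv (deriv ξ)) t = 0)
    (hK : K ≠ 0) (hν'' : ∀ t, deriv (deriv ν) t = K)
    (hf' : ∀ x, deriv f x ≠ 0)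
    (hode : ∀ x y : ℝ,
        deriv (deriv ξ) x * (deriv (deriv f) x / deriv f x) +
          (-(2 * K * deriv (deriv f) x * deriv f x) +
            deriv ν (y - f x) * deriv (deriv (deriv f)) x -
            deriv ν (y - f x) * (deriv (deriv f) x) ^ 2 / deriv f x) = 0) :
    ∀ x, deriv (deriv f) x = 0 := by
  have hf1 : ContDiff ℝ 2 (deriv f) := hf.deriv'
  have hf2 : Differentiable ℝ (deriv (deriv f)) := hf1.deriv'.differentiable one_ne_zero
  have hsplit (x : ℝ) :
      deriv (deriv ξ) x * (deriv (deriv f) x / deriv f x)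
          - 2 * K * deriv (deriv f) x * deriv f x = 0 ∧
        deriv (deriv (deriv f)) x - deriv (deriv f) x ^ 2 / deriv f x = 0 :=
    eq_zero_and_eq_zero_of_forall_add_mul_eq_zero
      (exists_apply_ne_of_deriv_ne_zero ((hν'' 0).trans_ne hK)) fun t => by
        have h := hode x (t + f x)
        rw [add_sub_cancel_right] at h
        linear_combination h
  obtain ⟨c, hc⟩ := exists_eq_const_mul_of_deriv_mul_eq_mul_deriv hf2
      (hf1.differentiable two_ne_zero) hf' fun x => by
    have hB := (hsplit x).2
    field_simp [hf' x] at hB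
    linear_combination hB
  suffices hc0 : c = 0 by simpa [hc0] using hc
  by_contra hc0
  have hξ'' : deriv (deriv ξ) = fun x => 2 * K * deriv f x ^ 2 := funext fun x => by
    have hA := (hsplit x).1
    rw [hc x, mul_div_cancel_right₀ _ (hf' x)] at hA
    exact mul_left_cancel₀ hc0 (by linear_combination hA)
  exact hc0 (eq_zero_of_deriv_const_mul_sq_eq_zero (hf1.differentiable two_ne_zero 0) (hc 0)
    (hf' 0) (mul_ne_zero two_ne_zero hK) (hξ'' ▸ hξ''' 0))

theorem stmt_7 (ν ξ f : ℝ → ℝ) (K : ℝ)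
    (hν : ContDiff ℝ 3 ν) (hξ : ContDiff ℝ 3 ξ) (hf : ContDiff ℝ 3 f)
    (hν''' : ∀ t, deriv (deriv (deriv ν)) t = 0)
    (hξ''' : ∀ t, deriv (deriv (deriv ξ)) t = 0)
    (hK : K ≠ 0) (hν'' : ∀ t, deriv (deriv ν) t = K)
    (hf' : ∀ x, deriv f x ≠ 0)
    (hode : ∀ x y : ℝ,
        deriv (deriv ξ) x * (deriv (deriv f) x / deriv f x) +
          (-(2 * K * deriv (deriv f) x * deriv f x) +
            deriv ν (y - f x) * deriv (deriv (deriv f)) x -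
            deriv ν (y - f x) * (deriv (deriv f) x) ^ 2 / deriv f x) = 0) :
    ∀ x, deriv (deriv f) x = 0 :=
  stmt_7_general ν ξ f K hf hξ''' hK hν'' hf' hode
end

section
/- Let g : ℝᵈ → ℝ be smooth with ∂ᵈ g / ∂x₁⋯∂x_d ≡ 0. Then g can be written as g = Σ_{r=1}^{d} g_r where each g_r : ℝᵈ → ℝ is smooth and does not depend on the coordinate x_r. -/
namespace Stmt10Aux

variable {d : ℕ}

lemma mixedPartial_cons (i : Fin d) (l : List (Fin d)) (f : (Fin d → ℝ) → ℝ) (x : Fin d → ℝ) :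
    mixedPartial (i :: l) f x = fderiv ℝ (mixedPartial l f) x (Pi.single i 1) := rfl

lemma mixedPartial_cons' (i : Fin d) (l : List (Fin d)) (f : (Fin d → ℝ) → ℝ) :
    mixedPartial (i :: l) f = fun x => fderiv ℝ (mixedPartial l f) x (Pi.single i 1) := rfl

/-- The continuous linear map that zeroes out the `i`-th coordinate. -/
noncomputable def L (i : Fin d) : (Fin d → ℝ) →L[ℝ] (Fin d → ℝ) :=
  ContinuousLinearMap.pi (fun j => if j = i then 0 else ContinuousLinearMap.proj j)

lemma L_apply (i : Fin d) (x : Fin d → ℝ) (j : Fin d) :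
    L i x j = if j = i then 0 else x j := by
  simp only [L, ContinuousLinearMap.pi_apply]
  split <;> simp

lemma L_single (i j : Fin d) (hji : j ≠ i) : L i (Pi.single j (1:ℝ)) = Pi.single j 1 := by
  funext k
  rw [L_apply]
  split
  · next h => subst h; rw [Pi.single_eq_of_ne (Ne.symm hji)]
  · rfl

lemma mixedPartial_contDiff (l : List (Fin d)) (f : (Fin d → ℝ) → ℝ)
    (hf : ContDiff ℝ (⊤ : ℕ∞) f) : ContDiff ℝ (⊤ : ℕ∞) (mixedPartial l f) := by
  induction l with
  | nil => exact hf
  | cons j t ih =>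
    rw [mixedPartial_cons']
    exact (ih.fderiv_right (m := (⊤ : ℕ∞)) (by simp)).clm_apply contDiff_const

lemma indep (h : (Fin d → ℝ) → ℝ) (hh : ContDiff ℝ (⊤ : ℕ∞) h) (i : Fin d)
    (hz : ∀ x, fderiv ℝ h x (Pi.single i 1) = 0) :
    ∀ x y : Fin d → ℝ, (∀ j, j ≠ i → x j = y j) → h x = h y := by
  intro x y hxy
  have key : ∀ z : Fin d → ℝ, ∀ t : ℝ, h (Function.update z i t) = h (Function.update z i 0) := by
    intro z t
    set φ : ℝ → ℝ := fun s => h (Function.update z i s) with hφ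
    have path : ∀ s : ℝ, Function.update z i s = Function.update z i 0 + s • (Pi.single i 1 : Fin d → ℝ) := by
      intro s; funext k
      by_cases hk : k = i
      · subst hk; simp
      · simp [Function.update_of_ne hk, Pi.single_eq_of_ne hk]
    have hder : ∀ s : ℝ, HasDerivAt φ 0 s := by
      intro s
      have h1 : HasDerivAt (fun s : ℝ => Function.update z i 0 + s • (Pi.single i 1 : Fin d → ℝ))
          (Pi.single i 1 : Fin d → ℝ) s := by
        have := ((hasDerivAt_id s).smul_const (Pi.single i 1 : Fin d → ℝ)).const_add
          (Function.update z i 0)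
        simpa using this
      have h2 : HasFDerivAt h (fderiv ℝ h (Function.update z i s)) (Function.update z i s) :=
        (hh.differentiable (by simp) (Function.update z i s)).hasFDerivAt
      have h2' : HasFDerivAt h (fderiv ℝ h (Function.update z i s))
          (Function.update z i 0 + s • (Pi.single i 1 : Fin d → ℝ)) := path s ▸ h2
      have h3 := h2'.comp_hasDerivAt s h1
      have : φ = fun s => h (Function.update z i 0 + s • (Pi.single i 1 : Fin d → ℝ)) := by
        funext s
        show h (Function.update z i s) = _
        rw [path s]
      rw [this]
      simpa [hz, Function.comp_def] using h3
    have : φ t = φ 0 := by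
      apply is_const_of_deriv_eq_zero
      · intro s; exact (hder s).differentiableAt
      · intro s; exact (hder s).deriv
    simpa [hφ] using this
  have hx : h x = h (Function.update x i 0) := by
    have := key x (x i); simpa using this
  have hy : h y = h (Function.update y i 0) := by
    have := key y (y i); simpa using this
  have hupd : Function.update x i 0 = Function.update y i 0 := by
    funext k
    by_cases hk : k = i
    · subst hk; simp
    · simp [Function.update_of_ne hk, hxy k hk]
  rw [hx, hy, hupd]

lemma mixedPartial_comp (i : Fin d) :
    ∀ l : List (Fin d), i ∉ l → ∀ F : (Fin d → ℝ) → ℝ, ContDiff ℝ (⊤ : ℕ∞) F →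
      ∀ x, mixedPartial l (fun y => F (L i y)) x = mixedPartial l F (L i x) := by
  intro l
  induction l with
  | nil => intro _ F _ x; rfl
  | cons j t ih =>
    intro hil F hF x
    have hji : j ≠ i := fun h => hil (h ▸ List.mem_cons_self (a := j) (l := t))
    have hit : i ∉ t := fun h => hil (List.mem_cons_of_mem j h)
    rw [mixedPartial_cons, mixedPartial_cons]
    have heq : mixedPartial t (fun y => F (L i y)) = fun y => mixedPartial t F (L i y) :=
      funext (ih hit F hF)
    rw [heq]
    
    have hdiff : DifferentiableAt ℝ (mixedPartial t F) (L i x) :=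
      (mixedPartial_contDiff t F hF).differentiable (by simp) _
    have hchain : fderiv ℝ (fun y => mixedPartial t F (L i y)) x
        = (fderiv ℝ (mixedPartial t F) (L i x)).comp (L i) := by
      rw [show (fun y => mixedPartial t F (L i y)) = (mixedPartial t F) ∘ (L i) from rfl]
      rw [fderiv_comp x hdiff (L i).differentiableAt, (L i).fderiv]
    rw [hchain]
    simp only [ContinuousLinearMap.coe_comp', Function.comp_apply]
    rw [L_single i j hji]

lemma mixedPartial_sub :
    ∀ l : List (Fin d), ∀ f g : (Fin d → ℝ) → ℝ, ContDiff ℝ (⊤ : ℕ∞) f → ContDiff ℝ (⊤ : ℕ∞) g →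
      ∀ x, mixedPartial l (fun y => f y - g y) x = mixedPartial l f x - mixedPartial l g x := by
  intro l
  induction l with
  | nil => intro f g _ _ x; rfl
  | cons j t ih =>
    intro f g hf hg x
    rw [mixedPartial_cons, mixedPartial_cons, mixedPartial_cons]
    
    have heq : mixedPartial t (fun y => f y - g y)
        = fun y => mixedPartial t f y - mixedPartial t g y := funext (ih f g hf hg)
    rw [heq]
    have h1 : DifferentiableAt ℝ (mixedPartial t f) x :=
      (mixedPartial_contDiff t f hf).differentiable (by simp) x
    have h2 : DifferentiableAt ℝ (mixedPartial t g) x :=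
      (mixedPartial_contDiff t g hg).differentiable (by simp) x
    rw [fderiv_fun_sub h1 h2]
    rfl

lemma key_lemma :
    ∀ l : List (Fin d), l.Nodup → ∀ g : (Fin d → ℝ) → ℝ, ContDiff ℝ (⊤ : ℕ∞) g →
      (∀ x, mixedPartial l g x = 0) →
      ∃ gr : Fin d → ((Fin d → ℝ) → ℝ),
        (∀ r, ContDiff ℝ (⊤ : ℕ∞) (gr r)) ∧
        (∀ x, g x = ∑ r ∈ l.toFinset, gr r x) ∧
        (∀ r ∈ l, ∀ x y : Fin d → ℝ, (∀ i, i ≠ r → x i = y i) → gr r x = gr r y) ∧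
        (∀ r, r ∉ l → gr r = 0) := by
  intro l
  induction l with
  | nil =>
    intro _ g hg hv
    refine ⟨fun _ => 0, fun _ => contDiff_const, ?_, ?_, fun _ _ => rfl⟩
    · intro x; simpa [mixedPartial] using hv x
    · intro r hr; exact absurd hr (List.not_mem_nil (a := r))
  | cons i l' ih =>
    intro hnd g hg hv
    have hil' : i ∉ l' := (List.nodup_cons.mp hnd).1
    have hnd' : l'.Nodup := (List.nodup_cons.mp hnd).2
    set H := mixedPartial l' g with hH
    have hHsmooth : ContDiff ℝ (⊤ : ℕ∞) H := mixedPartial_contDiff l' g hg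
    have hHz : ∀ x, fderiv ℝ H x (Pi.single i 1) = 0 := fun x => hv x
    have hHindep := indep H hHsmooth i hHz
    set g₀ : (Fin d → ℝ) → ℝ := fun x => g (L i x) with hg₀
    have hg₀smooth : ContDiff ℝ (⊤ : ℕ∞) g₀ := hg.comp (L i).contDiff
    set h : (Fin d → ℝ) → ℝ := fun x => g x - g₀ x with hh
    have hhsmooth : ContDiff ℝ (⊤ : ℕ∞) h := hg.sub hg₀smooth
    have hhv : ∀ x, mixedPartial l' h x = 0 := by
      intro x
      rw [hh, mixedPartial_sub l' g g₀ hg hg₀smooth x]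
      have : mixedPartial l' g₀ x = H (L i x) := mixedPartial_comp i l' hil' g hg x
      rw [this]
      have : H (L i x) = H x := by
        apply hHindep
        intro j hj
        rw [L_apply, if_neg hj]
      rw [this, sub_self]
    obtain ⟨hr, hr_smooth, hr_sum, hr_indep, hr_zero⟩ := ih hnd' h hhsmooth hhv
    refine ⟨Function.update hr i g₀, ?_, ?_, ?_, ?_⟩
    · intro r
      by_cases hri : r = i
      · subst hri; rw [Function.update_self]; exact hg₀smooth
      · rw [Function.update_of_ne hri]; exact hr_smooth r
    · intro x
      rw [List.toFinset_cons]
      have hinot : i ∉ l'.toFinset := by simpa using hil'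
      rw [Finset.sum_insert hinot]
      have hsum : ∑ r ∈ l'.toFinset, Function.update hr i g₀ r x
          = ∑ r ∈ l'.toFinset, hr r x := by
        apply Finset.sum_congr rfl
        intro r hrmem
        have hri : r ≠ i := by
          intro hri; exact hinot (hri ▸ hrmem)
        rw [Function.update_of_ne hri]
      rw [hsum, Function.update_self, ← hr_sum x]
      simp [hh]
    · intro r hrmem x y hxy
      by_cases hri : r = i
      · subst hri
        rw [Function.update_self]
        show g (L r x) = g (L r y)
        have : L r x = L r y := by
          funext k
          rw [L_apply, L_apply]
          by_cases hk : k = r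
          · simp [hk]
          · simp [if_neg hk, hxy k hk]
        rw [this]
      · rw [Function.update_of_ne hri]
        have : r ∈ l' := by
          rcases List.mem_cons.mp hrmem with h1 | h1
          · exact absurd h1 hri
          · exact h1
        exact hr_indep r this x y hxy
    · intro r hrmem
      have hri : r ≠ i := fun h => hrmem (h ▸ List.mem_cons_self (a := i) (l := l'))
      have hrl' : r ∉ l' := fun h => hrmem (List.mem_cons_of_mem i h)
      rw [Function.update_of_ne hri]
      exact hr_zero r hrl'

end Stmt10Aux

theorem stmt_10 {d : ℕ} (g : (Fin d → ℝ) → ℝ) (hg : ContDiff ℝ (⊤ : ℕ∞) g)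
    (hvanish : ∀ x, mixedPartial (Finset.univ : Finset (Fin d)).toList g x = 0) :
    ∃ gr : Fin d → ((Fin d → ℝ) → ℝ),
      (∀ r, ContDiff ℝ (⊤ : ℕ∞) (gr r)) ∧
      (∀ x, g x = ∑ r : Fin d, gr r x) ∧
      (∀ r : Fin d, ∀ x y : Fin d → ℝ, (∀ i, i ≠ r → x i = y i) → gr r x = gr r y) := by
  obtain ⟨gr, h1, h2, h3, h4⟩ := Stmt10Aux.key_lemma (Finset.univ : Finset (Fin d)).toList
    (Finset.nodup_toList _) g hg hvanish
  refine ⟨gr, h1, ?_, ?_⟩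
  · intro x
    rw [h2 x]
    congr 1
    rw [Finset.toList_toFinset]
  · intro r x y hxy
    exact h3 r (by simp [Finset.mem_toList]) x y hxy
end
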